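/- Let P = Σ_{|α|≤d} a_α(x) D^α be a linear partial differential operator with smooth real coefficients on ℝ^M. Assume that P is hypoelliptic in the following weak sense: whenever u ∈ L¹_loc(ℝ^M) satisfies ∫_{ℝ^M} u(y) P*φ(y) dy = 0 for every φ ∈ C_c^∞(ℝ^M), there exists h ∈ C^∞(ℝ^M) with u = h almost everywhere on ℝ^M. Assume further the following Liouville-type property (a consequence of the Weak Maximum Principle for P): every h ∈ C^∞(ℝ^M) with Ph = 0 pointwise on ℝ^M and h(y) → 0 as ‖y‖ → ∞ vanishes identically. If Γ₁ and Γ₂ are global fundamental solutions for P such that, for every x ∈ ℝ^M and for i = 1, 2, the function Γ_i(x;·) is continuous on ℝ^M \ {x} and Γ_i(x;y) → 0 as ‖y‖ → ∞, then for every x ∈ ℝ^M one has Γ₁(x;y) = Γ₂(x;y) for every y ∈ ℝ^M with y ≠ x. -/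

import Mathlib

open MeasureTheory Filter

noncomputable section

/-- The directional derivative of `f` along `v`. -/
def dirDeriv {E : Type*} [NormedAddCommGroup E] [NormedSpace ℝ E]
    (v : E) (f : E → ℝ) : E → ℝ :=
  fun x => fderiv ℝ f x v

/-- Iterated directional derivative of `f` along `v`. -/
def dirDerivIter {E : Type*} [NormedAddCommGroup E] [NormedSpace ℝ E]
    (v : E) : ℕ → (E → ℝ) → (E → ℝ)
  | 0, f => f
  | k + 1, f => dirDeriv v (dirDerivIter v k f)

/-- Derivative along a list of (direction, multiplicity) pairs. -/
def derivAlong {E : Type*} [NormedAddCommGroup E] [NormedSpace ℝ E] :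
    List (E × ℕ) → (E → ℝ) → (E → ℝ)
  | [], f => f
  | vk :: rest, f => dirDerivIter vk.1 vk.2 (derivAlong rest f)

/-- The multi-index partial derivative `D^α` on `ℝ^M`. -/
def Dmulti {M : ℕ} (α : Fin M → ℕ) (f : (Fin M → ℝ) → ℝ) : (Fin M → ℝ) → ℝ :=
  derivAlong ((List.finRange M).map fun i => (Pi.single i (1 : ℝ), α i)) f

/-- Application of the PDO `P = Σ_i a_i D^{α_i}` on `ℝ^M`. -/
def pdoApply {M : ℕ} {ι : Type} [Fintype ι]
    (a : ι → (Fin M → ℝ) → ℝ) (α : ι → Fin M → ℕ)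
    (f : (Fin M → ℝ) → ℝ) (x : Fin M → ℝ) : ℝ :=
  ∑ i, a i x * Dmulti (α i) f x

/-- The formal adjoint `P*ψ = Σ_i (−1)^{|α_i|} D^{α_i}(a_i ψ)`. -/
def pdoAdj {M : ℕ} {ι : Type} [Fintype ι]
    (a : ι → (Fin M → ℝ) → ℝ) (α : ι → Fin M → ℕ)
    (ψ : (Fin M → ℝ) → ℝ) (x : Fin M → ℝ) : ℝ :=
  ∑ i, (-1 : ℝ) ^ (∑ j, α i j) * Dmulti (α i) (fun y => a i y * ψ y) x

/-- `Γ` is a global fundamental solution for the operator with data `(a, α)` on `ℝ^M`: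
for every pole `x`, `Γ(x; ·)` is locally integrable and
`∫ Γ(x;y) P*φ(y) dy = −φ(x)` for every test function `φ`. -/
def IsFundSol {M : ℕ} {ι : Type} [Fintype ι]
    (a : ι → (Fin M → ℝ) → ℝ) (α : ι → Fin M → ℕ)
    (Γ : (Fin M → ℝ) → (Fin M → ℝ) → ℝ) : Prop :=
  ∀ x : Fin M → ℝ,
    LocallyIntegrable (Γ x) volume ∧
    ∀ φ : (Fin M → ℝ) → ℝ, ContDiff ℝ (⊤ : ℕ∞) φ → HasCompactSupport φ →
      ∫ y, Γ x y * pdoAdj a α φ y = -φ x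

/-!
The difference `u = Γ₁(x; ·) - Γ₂(x; ·)` satisfies `∫ u P*φ = 0` for every test function `φ`,
so by hypoellipticity it agrees almost everywhere with a smooth `h`; as `u` is continuous off the
pole, `u = h` on `{x}ᶜ`, hence `h` vanishes at infinity. Integrating by parts,
`∫ (P h) φ = ∫ h P*φ = 0` for every `φ`, so `P h = 0`, and the Liouville property forces `h = 0`.
-/

open Topology
open scoped ContDiff

section DirectionalDerivative

variable {E : Type*} [NormedAddCommGroup E] [NormedSpace ℝ E]

theorem contDiff_dirDeriv {f : E → ℝ} (hf : ContDiff ℝ ∞ f) (v : E) :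
    ContDiff ℝ ∞ (dirDeriv v f) :=
  (hf.fderiv_right (by exact_mod_cast le_top)).clm_apply contDiff_const

theorem contDiff_dirDerivIter {f : E → ℝ} (hf : ContDiff ℝ ∞ f) (v : E) (k : ℕ) :
    ContDiff ℝ ∞ (dirDerivIter v k f) := by
  induction k with
  | zero => exact hf
  | succ k ih => exact contDiff_dirDeriv ih v

theorem contDiff_derivAlong {f : E → ℝ} (hf : ContDiff ℝ ∞ f) (L : List (E × ℕ)) :
    ContDiff ℝ ∞ (derivAlong L f) := by
  induction L with
  | nil => exact hf
  | cons vk L ih => exact contDiff_dirDerivIter ih vk.1 vk.2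

theorem hasCompactSupport_dirDeriv {f : E → ℝ} (hf : HasCompactSupport f) (v : E) :
    HasCompactSupport (dirDeriv v f) :=
  hf.fderiv_apply ℝ v

theorem hasCompactSupport_dirDerivIter {f : E → ℝ} (hf : HasCompactSupport f) (v : E) (k : ℕ) :
    HasCompactSupport (dirDerivIter v k f) := by
  induction k with
  | zero => exact hf
  | succ k ih => exact hasCompactSupport_dirDeriv ih v

theorem hasCompactSupport_derivAlong {f : E → ℝ} (hf : HasCompactSupport f)
    (L : List (E × ℕ)) : HasCompactSupport (derivAlong L f) := by
  induction L with
  | nil => exact hf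
  | cons vk L ih => exact hasCompactSupport_dirDerivIter ih vk.1 vk.2

theorem dirDeriv_comm {f : E → ℝ} (hf : ContDiff ℝ ∞ f) (v w : E) :
    dirDeriv v (dirDeriv w f) = dirDeriv w (dirDeriv v f) := by
  funext x
  -- symmetry of the second derivative, read off the vanishing Lie bracket of constant fields
  have h := VectorField.fderiv_apply_lieBracket (V := fun _ => v) (W := fun _ => w) (x := x)
    hf.contDiffAt (by rw [minSmoothness_of_isRCLikeNormedField]; exact ENat.LEInfty.out)
    (differentiableAt_const w) (differentiableAt_const v)
  simp only [VectorField.lieBracket, fderiv_fun_const, Pi.zero_apply, zero_apply, sub_self,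
    map_zero] at h
  exact sub_eq_zero.1 h.symm

theorem dirDerivIter_dirDeriv_comm {f : E → ℝ} (hf : ContDiff ℝ ∞ f) (v w : E) (k : ℕ) :
    dirDerivIter w k (dirDeriv v f) = dirDeriv v (dirDerivIter w k f) := by
  induction k with
  | zero => rfl
  | succ k ih =>
    change dirDeriv w (dirDerivIter w k (dirDeriv v f))
      = dirDeriv v (dirDeriv w (dirDerivIter w k f))
    rw [ih, dirDeriv_comm (contDiff_dirDerivIter hf w k)]

theorem dirDerivIter_comm {f : E → ℝ} (hf : ContDiff ℝ ∞ f) (v w : E) (k l : ℕ) :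
    dirDerivIter w l (dirDerivIter v k f) = dirDerivIter v k (dirDerivIter w l f) := by
  induction k with
  | zero => rfl
  | succ k ih =>
    change dirDerivIter w l (dirDeriv v (dirDerivIter v k f))
      = dirDeriv v (dirDerivIter v k (dirDerivIter w l f))
    rw [dirDerivIter_dirDeriv_comm (contDiff_dirDerivIter hf v k), ih]

theorem derivAlong_dirDerivIter_comm {f : E → ℝ} (hf : ContDiff ℝ ∞ f) (v : E) (k : ℕ)
    (L : List (E × ℕ)) :
    derivAlong L (dirDerivIter v k f) = dirDerivIter v k (derivAlong L f) := by
  induction L with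
  | nil => rfl
  | cons vk L ih =>
    change dirDerivIter vk.1 vk.2 (derivAlong L (dirDerivIter v k f))
      = dirDerivIter v k (dirDerivIter vk.1 vk.2 (derivAlong L f))
    rw [ih, dirDerivIter_comm (contDiff_derivAlong hf L)]

variable [MeasurableSpace E] [BorelSpace E] [FiniteDimensional ℝ E]
  {μ : Measure E} [μ.IsAddHaarMeasure]

theorem integral_mul_dirDeriv {f g : E → ℝ} (hf : ContDiff ℝ ∞ f) (hg : ContDiff ℝ ∞ g)
    (hgc : HasCompactSupport g) (v : E) :
    ∫ y, f y * dirDeriv v g y ∂μ = -∫ y, dirDeriv v f y * g y ∂μ :=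
  integral_mul_fderiv_eq_neg_fderiv_mul_of_integrable
    (((contDiff_dirDeriv hf v).continuous.mul hg.continuous).integrable_of_hasCompactSupport
      hgc.mul_left)
    ((hf.continuous.mul (contDiff_dirDeriv hg v).continuous).integrable_of_hasCompactSupport
      (hasCompactSupport_dirDeriv hgc v).mul_left)
    ((hf.continuous.mul hg.continuous).integrable_of_hasCompactSupport hgc.mul_left)
    (fun x _ => hf.differentiable (by simp) x) (fun x _ => hg.differentiable (by simp) x)

theorem integral_mul_dirDerivIter {f g : E → ℝ} (hf : ContDiff ℝ ∞ f) (hg : ContDiff ℝ ∞ g)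
    (hgc : HasCompactSupport g) (v : E) (k : ℕ) :
    ∫ y, f y * dirDerivIter v k g y ∂μ = (-1) ^ k * ∫ y, dirDerivIter v k f y * g y ∂μ := by
  induction k generalizing f with
  | zero => simp [dirDerivIter]
  | succ k ih =>
    calc ∫ y, f y * dirDerivIter v (k + 1) g y ∂μ
        = -∫ y, dirDeriv v f y * dirDerivIter v k g y ∂μ :=
          integral_mul_dirDeriv hf (contDiff_dirDerivIter hg v k)
            (hasCompactSupport_dirDerivIter hgc v k) v
      _ = -((-1) ^ k * ∫ y, dirDerivIter v k (dirDeriv v f) y * g y ∂μ) := by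
          rw [ih (contDiff_dirDeriv hf v)]
      _ = (-1) ^ (k + 1) * ∫ y, dirDerivIter v (k + 1) f y * g y ∂μ := by
          rw [dirDerivIter_dirDeriv_comm hf, pow_succ, dirDerivIter]
          ring

theorem integral_mul_derivAlong {f g : E → ℝ} (hf : ContDiff ℝ ∞ f) (hg : ContDiff ℝ ∞ g)
    (hgc : HasCompactSupport g) (L : List (E × ℕ)) :
    ∫ y, f y * derivAlong L g y ∂μ
      = (-1) ^ (L.map Prod.snd).sum * ∫ y, derivAlong L f y * g y ∂μ := by
  induction L generalizing f with
  | nil => simp [derivAlong]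
  | cons vk L ih =>
    calc ∫ y, f y * derivAlong (vk :: L) g y ∂μ
        = (-1) ^ vk.2 * ∫ y, dirDerivIter vk.1 vk.2 f y * derivAlong L g y ∂μ :=
          integral_mul_dirDerivIter hf (contDiff_derivAlong hg L)
            (hasCompactSupport_derivAlong hgc L) vk.1 vk.2
      _ = (-1) ^ vk.2 * ((-1) ^ (L.map Prod.snd).sum
            * ∫ y, derivAlong L (dirDerivIter vk.1 vk.2 f) y * g y ∂μ) := by
          rw [ih (contDiff_dirDerivIter hf vk.1 vk.2)]
      _ = (-1) ^ ((vk :: L).map Prod.snd).sum * ∫ y, derivAlong (vk :: L) f y * g y ∂μ := by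
          rw [derivAlong_dirDerivIter_comm hf, List.map_cons, List.sum_cons, pow_add, mul_assoc,
            derivAlong]

end DirectionalDerivative

theorem hasCompactSupport_finsetSum {X R ι : Type*} [TopologicalSpace X] [AddCommMonoid R]
    {s : Finset ι} {f : ι → X → R} (hf : ∀ i ∈ s, HasCompactSupport (f i)) :
    HasCompactSupport fun x => ∑ i ∈ s, f i x := by
  classical
  induction s using Finset.induction_on with
  | empty =>
    simp only [Finset.sum_empty]
    exact HasCompactSupport.zero
  | insert i s hi ih =>
    simp only [Finset.sum_insert hi]
    exact (hf i (s.mem_insert_self i)).add (ih fun j hj => hf j (Finset.mem_insert_of_mem hj))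

section PartialDifferentialOperator

variable {M : ℕ}

theorem contDiff_Dmulti {f : (Fin M → ℝ) → ℝ} (hf : ContDiff ℝ ∞ f) (α : Fin M → ℕ) :
    ContDiff ℝ ∞ (Dmulti α f) :=
  contDiff_derivAlong hf _

theorem hasCompactSupport_Dmulti {f : (Fin M → ℝ) → ℝ} (hf : HasCompactSupport f)
    (α : Fin M → ℕ) : HasCompactSupport (Dmulti α f) :=
  hasCompactSupport_derivAlong hf _

variable {μ : Measure (Fin M → ℝ)} [μ.IsAddHaarMeasure]

theorem integral_mul_Dmulti {f g : (Fin M → ℝ) → ℝ} (hf : ContDiff ℝ ∞ f)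
    (hg : ContDiff ℝ ∞ g) (hgc : HasCompactSupport g) (α : Fin M → ℕ) :
    ∫ y, f y * Dmulti α g y ∂μ = (-1) ^ (∑ j, α j) * ∫ y, Dmulti α f y * g y ∂μ := by
  have hsum : (((List.finRange M).map fun i => (Pi.single i (1 : ℝ), α i)).map Prod.snd).sum
      = ∑ j, α j := by
    rw [List.map_map, Fin.sum_univ_def]
    rfl
  rw [Dmulti, Dmulti, integral_mul_derivAlong hf hg hgc, hsum]

variable {ι : Type} [Fintype ι] {a : ι → (Fin M → ℝ) → ℝ}

theorem continuous_pdoApply (ha : ∀ i, ContDiff ℝ ∞ (a i)) (α : ι → Fin M → ℕ)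
    {h : (Fin M → ℝ) → ℝ} (hh : ContDiff ℝ ∞ h) : Continuous (pdoApply a α h) :=
  continuous_finsetSum _ fun i _ => (ha i).continuous.mul (contDiff_Dmulti hh (α i)).continuous

theorem continuous_pdoAdj (ha : ∀ i, ContDiff ℝ ∞ (a i)) (α : ι → Fin M → ℕ)
    {φ : (Fin M → ℝ) → ℝ} (hφ : ContDiff ℝ ∞ φ) : Continuous (pdoAdj a α φ) :=
  continuous_finsetSum _ fun i _ =>
    continuous_const.mul (contDiff_Dmulti ((ha i).mul hφ) (α i)).continuous

theorem hasCompactSupport_pdoAdj (α : ι → Fin M → ℕ)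
    {φ : (Fin M → ℝ) → ℝ} (hφc : HasCompactSupport φ) : HasCompactSupport (pdoAdj a α φ) :=
  hasCompactSupport_finsetSum fun i _ => (hasCompactSupport_Dmulti hφc.mul_left (α i)).mul_left

theorem integral_mul_pdoAdj (ha : ∀ i, ContDiff ℝ ∞ (a i)) (α : ι → Fin M → ℕ)
    {h φ : (Fin M → ℝ) → ℝ} (hh : ContDiff ℝ ∞ h) (hφ : ContDiff ℝ ∞ φ)
    (hφc : HasCompactSupport φ) :
    ∫ y, h y * pdoAdj a α φ y ∂μ = ∫ y, pdoApply a α h y * φ y ∂μ := by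
  have hcoef (i : ι) : ContDiff ℝ ∞ fun y => a i y * φ y := (ha i).mul hφ
  have term (i : ι) :
      ∫ y, h y * ((-1) ^ (∑ j, α i j) * Dmulti (α i) (fun y => a i y * φ y) y) ∂μ
        = ∫ y, a i y * Dmulti (α i) h y * φ y ∂μ := by
    simp_rw [mul_left_comm (h _), integral_const_mul]
    rw [integral_mul_Dmulti hh (hcoef i) hφc.mul_left, ← mul_assoc, ← pow_add,
      Even.neg_one_pow ⟨_, rfl⟩, one_mul]
    simp_rw [mul_left_comm (Dmulti _ h _), mul_assoc]
  simp only [pdoAdj, pdoApply, Finset.mul_sum, Finset.sum_mul]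
  rw [integral_finsetSum _ fun i _ => ?_, integral_finsetSum _ fun i _ => ?_]
  · exact Finset.sum_congr rfl fun i _ => term i
  · exact (((ha i).continuous.mul (contDiff_Dmulti hh (α i)).continuous).mul
      hφ.continuous).integrable_of_hasCompactSupport hφc.mul_left
  · exact (hh.continuous.mul (continuous_const.mul
      (contDiff_Dmulti (hcoef i) (α i)).continuous)).integrable_of_hasCompactSupport
      ((hasCompactSupport_Dmulti hφc.mul_left (α i)).mul_left.mul_left)

theorem pdoApply_eq_zero_of_integral_mul_pdoAdj_eq_zero (ha : ∀ i, ContDiff ℝ ∞ (a i))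
    (α : ι → Fin M → ℕ) {h : (Fin M → ℝ) → ℝ} (hh : ContDiff ℝ ∞ h)
    (h0 : ∀ φ : (Fin M → ℝ) → ℝ, ContDiff ℝ ∞ φ → HasCompactSupport φ →
      ∫ y, h y * pdoAdj a α φ y ∂μ = 0) (x : Fin M → ℝ) :
    pdoApply a α h x = 0 := by
  have hPh := continuous_pdoApply ha α hh
  have hae : ∀ᵐ y ∂μ, pdoApply a α h y = 0 :=
    ae_eq_zero_of_integral_contDiff_smul_eq_zero hPh.locallyIntegrable fun φ hφ hφc => by
      simp_rw [smul_eq_mul, mul_comm (φ _)]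
      rw [← integral_mul_pdoAdj ha α hh hφ hφc, h0 φ hφ hφc]
  exact congrFun ((hPh.ae_eq_iff_eq μ continuous_const).1 hae) x

theorem IsFundSol.integral_sub_mul_pdoAdj_eq_zero {α : ι → Fin M → ℕ}
    (ha : ∀ i, ContDiff ℝ ∞ (a i)) {Γ₁ Γ₂ : (Fin M → ℝ) → (Fin M → ℝ) → ℝ}
    (hΓ₁ : IsFundSol a α Γ₁) (hΓ₂ : IsFundSol a α Γ₂) (x : Fin M → ℝ) {φ : (Fin M → ℝ) → ℝ}
    (hφ : ContDiff ℝ ∞ φ) (hφc : HasCompactSupport φ) :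
    ∫ y, (Γ₁ x y - Γ₂ x y) * pdoAdj a α φ y = 0 := by
  have integrable (Γ : (Fin M → ℝ) → (Fin M → ℝ) → ℝ) (hΓ : IsFundSol a α Γ) :
      Integrable fun y => Γ x y * pdoAdj a α φ y := by
    simpa [mul_comm] using (hΓ x).1.integrable_smul_left_of_hasCompactSupport
      (continuous_pdoAdj ha α hφ) (hasCompactSupport_pdoAdj α hφc)
  simp_rw [sub_mul]
  rw [integral_sub (integrable Γ₁ hΓ₁) (integrable Γ₂ hΓ₂), (hΓ₁ x).2 φ hφ hφc,
    (hΓ₂ x).2 φ hφ hφc, sub_self]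

end PartialDifferentialOperator

theorem fundamental_solution_unique_general
    (M : ℕ)
    (ι : Type) [Fintype ι]
    (a : ι → (Fin M → ℝ) → ℝ) (α : ι → Fin M → ℕ)
    (ha : ∀ i, ContDiff ℝ (⊤ : ℕ∞) (a i))
    (hhypo : ∀ u : (Fin M → ℝ) → ℝ, LocallyIntegrable u volume →
      (∀ φ : (Fin M → ℝ) → ℝ, ContDiff ℝ (⊤ : ℕ∞) φ → HasCompactSupport φ →
        ∫ y, u y * pdoAdj a α φ y = 0) →
      ∃ h : (Fin M → ℝ) → ℝ, ContDiff ℝ (⊤ : ℕ∞) h ∧ u =ᵐ[volume] h)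
    (hliouville : ∀ h : (Fin M → ℝ) → ℝ, ContDiff ℝ (⊤ : ℕ∞) h →
      (∀ x, pdoApply a α h x = 0) →
      Tendsto h (cocompact (Fin M → ℝ)) (nhds 0) →
      ∀ y, h y = 0)
    (Γ₁ Γ₂ : (Fin M → ℝ) → (Fin M → ℝ) → ℝ)
    (hΓ₁ : IsFundSol a α Γ₁) (hΓ₂ : IsFundSol a α Γ₂)
    (hc₁ : ∀ x, ContinuousOn (Γ₁ x) {x}ᶜ)
    (hc₂ : ∀ x, ContinuousOn (Γ₂ x) {x}ᶜ)
    (hv₁ : ∀ x, Tendsto (Γ₁ x) (cocompact (Fin M → ℝ)) (nhds 0))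
    (hv₂ : ∀ x, Tendsto (Γ₂ x) (cocompact (Fin M → ℝ)) (nhds 0)) :
    ∀ x y : Fin M → ℝ, y ≠ x → Γ₁ x y = Γ₂ x y := by
  intro x y hyx
  obtain ⟨h, hh, hae⟩ := hhypo (Γ₁ x - Γ₂ x) ((hΓ₁ x).1.sub (hΓ₂ x).1)
    fun φ hφ hφc => hΓ₁.integral_sub_mul_pdoAdj_eq_zero ha hΓ₂ x hφ hφc
  have heq : Set.EqOn (Γ₁ x - Γ₂ x) h {x}ᶜ :=
    Measure.eqOn_open_of_ae_eq (ae_restrict_of_ae hae) isOpen_compl_singleton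
      ((hc₁ x).sub (hc₂ x)) hh.continuous.continuousOn
  have hPh : ∀ z, pdoApply a α h z = 0 :=
    pdoApply_eq_zero_of_integral_mul_pdoAdj_eq_zero ha α hh fun φ hφ hφc => by
      rw [← hΓ₁.integral_sub_mul_pdoAdj_eq_zero ha hΓ₂ x hφ hφc]
      exact integral_congr_ae (hae.mono fun z hz => by simp [← hz])
  have hlim : Tendsto h (cocompact (Fin M → ℝ)) (𝓝 0) := by
    have hx : {x}ᶜ ∈ cocompact (Fin M → ℝ) := mem_cocompact.2 ⟨{x}, isCompact_singleton, le_rfl⟩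
    simpa using ((hv₁ x).sub (hv₂ x)).congr' (eventually_of_mem hx heq)
  have hy : Γ₁ x y - Γ₂ x y = h y := heq hyx
  rw [hliouville h hh hPh hlim y] at hy
  exact sub_eq_zero.1 hy

/-- **Uniqueness of the fundamental solution vanishing at infinity.**
Let `P = Σ_{|α| ≤ d} a_α D^α` be a linear PDO with smooth coefficients on `ℝ^M` which is
hypoelliptic (every locally integrable distributional solution of `Pu = 0` on `ℝ^M`
coincides a.e. with a smooth function) and enjoys the Liouville-type property that every
smooth global solution of `Ph = 0` vanishing at infinity is identically zero.  If `Γ₁, Γ₂`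
are global fundamental solutions for `P` such that each `Γᵢ(x; ·)` is continuous outside
`x` and vanishes at infinity, then `Γ₁(x; y) = Γ₂(x; y)` for all `y ≠ x`. -/
theorem fundamental_solution_unique
    (M : ℕ) (hM : 1 ≤ M)
    (ι : Type) [Fintype ι]
    (a : ι → (Fin M → ℝ) → ℝ) (α : ι → Fin M → ℕ)
    (ha : ∀ i, ContDiff ℝ (⊤ : ℕ∞) (a i))
    (hhypo : ∀ u : (Fin M → ℝ) → ℝ, LocallyIntegrable u volume →
      (∀ φ : (Fin M → ℝ) → ℝ, ContDiff ℝ (⊤ : ℕ∞) φ → HasCompactSupport φ →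
        ∫ y, u y * pdoAdj a α φ y = 0) →
      ∃ h : (Fin M → ℝ) → ℝ, ContDiff ℝ (⊤ : ℕ∞) h ∧ u =ᵐ[volume] h)
    (hliouville : ∀ h : (Fin M → ℝ) → ℝ, ContDiff ℝ (⊤ : ℕ∞) h →
      (∀ x, pdoApply a α h x = 0) →
      Tendsto h (cocompact (Fin M → ℝ)) (nhds 0) →
      ∀ y, h y = 0)
    (Γ₁ Γ₂ : (Fin M → ℝ) → (Fin M → ℝ) → ℝ)
    (hΓ₁ : IsFundSol a α Γ₁) (hΓ₂ : IsFundSol a α Γ₂)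
    (hc₁ : ∀ x, ContinuousOn (Γ₁ x) {x}ᶜ)
    (hc₂ : ∀ x, ContinuousOn (Γ₂ x) {x}ᶜ)
    (hv₁ : ∀ x, Tendsto (Γ₁ x) (cocompact (Fin M → ℝ)) (nhds 0))
    (hv₂ : ∀ x, Tendsto (Γ₂ x) (cocompact (Fin M → ℝ)) (nhds 0)) :
    ∀ x y : Fin M → ℝ, y ≠ x → Γ₁ x y = Γ₂ x y :=
  fundamental_solution_unique_general M ι a α ha hhypo hliouville Γ₁ Γ₂ hΓ₁ hΓ₂ hc₁ hc₂ hv₁ hv₂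

end
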